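/- Let (X, μ) be a probability space, Φ : X → X a measurable, measure-preserving bijection with measurable inverse, and ε : X → X a measurable, measure-preserving map with ε ∘ ε = id and ε ∘ Φ = Φ⁻¹ ∘ ε. Let Ψ : X → ℝ^N be measurable with integrable pairwise products of the form Ψ_i(x)·Ψ_j(Φ^{±1}(x)), and let M ∈ ℝ^{N×N} satisfy Ψ(ε(x)) = M·Ψ(x) for all x ∈ X. Then the correlator matrix G(i,j) := ∫_X Ψ_i(Φ(x))·Ψ_j(x) dμ(x) satisfies G = M · Gᵀ · Mᵀ. -/

import Mathlib

/-!
Reversing time with `ε` turns the correlator into the correlator of the transformed observables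
`M Ψ` with the time order exchanged, since `Φ ∘ ε = ε ∘ Φ⁻¹`; undoing the time shift with the
measure-preserving `Φ` and pulling the linear map `M` out of the integral gives `G = M Gᵀ Mᵀ`.
-/

open MeasureTheory Matrix

namespace MeasureTheory

variable {X ι : Type*} [MeasurableSpace X]

/-- The correlation matrix `⟨f gᵀ⟩`; the correlator `G` is `crossCorrelation μ (Ψ ∘ Φ) Ψ`. -/
noncomputable def crossCorrelation (μ : Measure X) (f g : X → ι → ℝ) : Matrix ι ι ℝ :=
  of fun i j => ∫ x, f x i * g x j ∂μ

theorem crossCorrelation_swap (μ : Measure X) (f g : X → ι → ℝ) :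
    crossCorrelation μ g f = (crossCorrelation μ f g)ᵀ := by
  ext i j
  simp only [crossCorrelation, transpose_apply, of_apply, mul_comm]

theorem crossCorrelation_comp {μ : Measure X} {T : X → X} (hT : MeasurePreserving T μ μ)
    (hT' : MeasurableEmbedding T) (f g : X → ι → ℝ) :
    crossCorrelation μ (f ∘ T) (g ∘ T) = crossCorrelation μ f g := by
  ext i j
  exact hT.integral_comp hT' fun x => f x i * g x j

theorem crossCorrelation_mulVec [Fintype ι] {μ : Measure X} {f g : X → ι → ℝ}
    (hfg : ∀ i j, Integrable (fun x => f x i * g x j) μ) (A B : Matrix ι ι ℝ) :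
    crossCorrelation μ (fun x => A *ᵥ f x) (fun x => B *ᵥ g x) =
      A * crossCorrelation μ f g * Bᵀ := by
  ext i j
  have hpointwise : ∀ x, (A *ᵥ f x) i * (B *ᵥ g x) j =
      ∑ l, ∑ k, A i k * (f x k * g x l) * B j l := by
    intro x
    simp only [mulVec, dotProduct, Finset.sum_mul_sum]
    rw [Finset.sum_comm]
    exact Finset.sum_congr rfl fun l _ => Finset.sum_congr rfl fun k _ => by ring
  have hterm : ∀ k l, Integrable (fun x => A i k * (f x k * g x l) * B j l) μ :=
    fun k l => ((hfg k l).const_mul _).mul_const _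
  simp only [crossCorrelation, of_apply, hpointwise, mul_apply, transpose_apply,
    Finset.sum_mul]
  rw [integral_finsetSum _ fun l _ => integrable_finsetSum _ fun k _ => hterm k l]
  refine Finset.sum_congr rfl fun l _ => ?_
  rw [integral_finsetSum _ fun k _ => hterm k l]
  refine Finset.sum_congr rfl fun k _ => ?_
  rw [integral_mul_const, integral_const_mul]

end MeasureTheory

theorem onsager_casimir_correlator_symmetry_general
    {X : Type*} [MeasurableSpace X] (μ : Measure X)
    (N : ℕ) (Φ Φinv ε : X → X)
    (hΦinv : Measurable Φinv)
    (hleft : Function.LeftInverse Φinv Φ)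
    (hright : Function.RightInverse Φinv Φ)
    (hpres : MeasurePreserving Φ μ μ)
    (hεpres : MeasurePreserving ε μ μ)
    (hεinv : ε ∘ ε = id)
    (hεΦ : ε ∘ Φ = Φinv ∘ ε)
    (Ψ : X → Fin N → ℝ)
    (hint1 : ∀ i j, Integrable (fun x => Ψ x i * Ψ (Φ x) j) μ)
    (M : Matrix (Fin N) (Fin N) ℝ)
    (hM : ∀ x, Ψ (ε x) = M.mulVec (Ψ x)) :
    (Matrix.of fun i j => ∫ x, Ψ (Φ x) i * Ψ x j ∂μ) =
      M * (Matrix.of fun i j => ∫ x, Ψ (Φ x) i * Ψ x j ∂μ)ᵀ * Mᵀ := by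
  have hεε : Function.Involutive ε := congrFun hεinv
  have hΦε : ∀ x, Φ (ε x) = ε (Φinv x) := fun x => by
    conv_rhs => rw [← hεε x, ← Function.comp_apply (f := Φinv), ← hεΦ, Function.comp_apply, hεε]
  have hεemb := (MeasurableEquiv.ofInvolutive ε hεε hεpres.measurable).measurableEmbedding
  have hΦemb := (MeasurableEquiv.mk ⟨Φ, Φinv, hleft, hright⟩ hpres.measurable
    hΦinv).measurableEmbedding
  change crossCorrelation μ (Ψ ∘ Φ) Ψ = M * (crossCorrelation μ (Ψ ∘ Φ) Ψ)ᵀ * Mᵀ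
  calc crossCorrelation μ (Ψ ∘ Φ) Ψ
      = crossCorrelation μ (Ψ ∘ Φ ∘ ε) (Ψ ∘ ε) := (crossCorrelation_comp hεpres hεemb _ _).symm
    _ = crossCorrelation μ ((fun x => M *ᵥ Ψ x) ∘ Φinv) (fun x => M *ᵥ Ψ x) := by
        congr 1 <;> funext x <;> simp only [Function.comp_apply, hΦε, hM]
    _ = crossCorrelation μ ((fun x => M *ᵥ Ψ x) ∘ Φinv ∘ Φ) ((fun x => M *ᵥ Ψ x) ∘ Φ) :=
        (crossCorrelation_comp hpres hΦemb _ _).symm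
    _ = crossCorrelation μ (fun x => M *ᵥ Ψ x) (fun x => M *ᵥ Ψ (Φ x)) := by
        rw [hleft.comp_eq_id]; rfl
    _ = M * (crossCorrelation μ (Ψ ∘ Φ) Ψ)ᵀ * Mᵀ := by
        rw [crossCorrelation_mulVec hint1, crossCorrelation_swap]; rfl

/-- Onsager–Casimir symmetry relation for correlators: if `ε` is a measure-preserving
involution with `ε ∘ Φ = Φ⁻¹ ∘ ε` and the observables transform as `Ψ ∘ ε = M·Ψ`,
then `G = M · Gᵀ · Mᵀ`, where `G(i,j) = ∫ Ψᵢ(Φx)·Ψⱼ(x) dμ = ⟨Ψᵢ(t)Ψⱼ(0)⟩`. -/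
theorem onsager_casimir_correlator_symmetry
    {X : Type*} [MeasurableSpace X] (μ : Measure X) [IsProbabilityMeasure μ]
    (N : ℕ) (Φ Φinv ε : X → X)
    (hΦ : Measurable Φ) (hΦinv : Measurable Φinv) (hε : Measurable ε)
    (hleft : Function.LeftInverse Φinv Φ)
    (hright : Function.RightInverse Φinv Φ)
    (hpres : MeasurePreserving Φ μ μ)
    (hεpres : MeasurePreserving ε μ μ)
    (hεinv : ε ∘ ε = id)
    (hεΦ : ε ∘ Φ = Φinv ∘ ε)
    (Ψ : X → Fin N → ℝ) (hΨ : Measurable Ψ)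
    (hint1 : ∀ i j, Integrable (fun x => Ψ x i * Ψ (Φ x) j) μ)
    (hint2 : ∀ i j, Integrable (fun x => Ψ x i * Ψ (Φinv x) j) μ)
    (M : Matrix (Fin N) (Fin N) ℝ)
    (hM : ∀ x, Ψ (ε x) = M.mulVec (Ψ x)) :
    (Matrix.of fun i j => ∫ x, Ψ (Φ x) i * Ψ x j ∂μ) =
      M * (Matrix.of fun i j => ∫ x, Ψ (Φ x) i * Ψ x j ∂μ)ᵀ * Mᵀ :=
  onsager_casimir_correlator_symmetry_general μ N Φ Φinv ε hΦinv hleft hright hpres hεpres hεinv hεΦ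
    Ψ hint1 M hM
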